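/- arXiv:0809.3066 — 2 statements merged into one kernel-verified Lean document; each statement's English description precedes it below -/
import Mathlib

section
/- (Kolmogorov extension theorem for type A spaces) Let Y be a nonempty set and {F_n}_{n≥0} an increasing sequence of countably generated σ-algebras on Y; put F = σ(⋃_{n≥0} F_n). Assume each (Y,F_n) is a type A space and that F is the inverse limit of {F_n}_{n≥0}, i.e., whenever {A_n}_{n≥0} is a decreasing sequence of sets with A_n an atom of F_n for each n, then ⋂_{n≥0} A_n ≠ ∅. Then (Y,F) is a type A space and {F_n}_{n≥0} has the Kolmogorov extension property: for every sequence {μ_n}_{n≥0} with μ_n a probability measure on (Y,F_n) satisfying μ_{n+1}(F') = μ_n(F') for all F' ∈ F_n and all n ≥ 0, there exists a probability measure μ on (Y,F) with μ(F') = μ_n(F') for all F' ∈ F_n and all n ≥ 0. -/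
open MeasureTheory

/-- A map `f : (X,mX) → (Y,mY)` between measurable spaces is *exactly measurable* if
`f⁻¹(mY) = mX`. -/
def ExactlyMeasurable' {X Y : Type*} (mX : MeasurableSpace X) (mY : MeasurableSpace Y)
    (f : X → Y) : Prop :=
  MeasurableSpace.comap f mY = mX

/-- A countably generated measurable space `(X,mX)` is a *type A space* if there is an
exactly measurable map into the Cantor space whose range is analytic. -/
def IsTypeA' {X : Type*} (mX : MeasurableSpace X) : Prop :=
  @MeasurableSpace.CountablyGenerated X mX ∧
    ∃ f : X → (ℕ → Bool), ExactlyMeasurable' mX inferInstance f ∧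
      MeasureTheory.AnalyticSet (Set.range f)

/-- The atom of a σ-algebra `m` containing a point `y`: the intersection of all
`m`-measurable sets containing `y`. -/
def atomOf {Y : Type*} (m : MeasurableSpace Y) (y : Y) : Set Y :=
  ⋂₀ {s : Set Y | MeasurableSet[m] s ∧ y ∈ s}

/-!
Choose exactly measurable maps `f n : Y → (ℕ → Bool)` with analytic ranges and put
`g y = (f n y)ₙ`. Then `⨆ n, 𝓕 n` is the pullback of the Borel σ-algebra along `g`, and the
hypothesis on atoms guarantees that `ω` lies in the range of `g` as soon as every truncation
`(ω 0, …, ω n, ω n, …)` lies in the range of the corresponding truncation of `g`. Each such range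
is analytic, being the image of `range (f n)` under a Borel map (Doob–Dynkin), so `range g` is a
countable intersection of analytic sets.

The consistent measures define a finitely additive content on `⋃ n, 𝓕 n`, and it remains to show
continuity at `∅`. By inner regularity of analytic sets, each set of a decreasing sequence of
content at least `ε` contains, up to a summable error, the preimage of a compact set of truncations
lying in the analytic range. The finite intersections of the closed cylinders over these compact
sets are therefore nonempty, so by compactness of `ℕ → ℕ → Bool` they share a point `ω`; by the first part `ω = g y`,
and `y` lies in every set of the sequence.
-/

open Set Filter Topology
open scoped ENNReal

lemma exists_measure_image_lt_inter_add {X : Type*} [MeasurableSpace X] (μ : Measure X)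
    [IsFiniteMeasure μ] (τ : (ℕ → ℕ) → X) (S : Set (ℕ → ℕ)) (m : ℕ) {δ : ℝ≥0∞} (hδ : δ ≠ 0) :
    ∃ j, μ (τ '' S) < μ (τ '' (S ∩ {x | x m ≤ j})) + δ := by
  have hmono : Monotone fun j => τ '' (S ∩ {x | x m ≤ j}) := fun j j' hj =>
    image_mono (inter_subset_inter_right _ fun x hx => le_trans hx hj)
  have hunion : τ '' S = ⋃ j, τ '' (S ∩ {x | x m ≤ j}) := by
    ext y
    simp only [mem_image, mem_iUnion, mem_inter_iff, mem_ofPred_eq]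
    exact ⟨fun ⟨x, hx, hxy⟩ => ⟨x m, x, ⟨hx, le_rfl⟩, hxy⟩,
      fun ⟨_, x, ⟨hx, _⟩, hxy⟩ => ⟨x, hx, hxy⟩⟩
  have : μ (τ '' S) < ⨆ j, (μ (τ '' (S ∩ {x | x m ≤ j})) + δ) := by
    rw [← ENNReal.iSup_add, ← hmono.measure_iUnion, ← hunion]
    exact ENNReal.lt_add_right (measure_ne_top μ _) hδ
  exact lt_iSup_iff.1 this

lemma iInter_closure_image_subset_image_pi {X : Type*} [TopologicalSpace X] [T2Space X]
    [FirstCountableTopology X] {τ : (ℕ → ℕ) → X} (hτ : Continuous τ) (b : ℕ → ℕ) :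
    ⋂ m, closure (τ '' {x | ∀ i < m, x i ≤ b i}) ⊆ τ '' univ.pi fun i => Iic (b i) := by
  intro y hy
  rw [mem_iInter] at hy
  obtain ⟨U, hU⟩ := (𝓝 y).exists_antitone_basis
  have : ∀ m, ∃ x : ℕ → ℕ, (∀ i < m, x i ≤ b i) ∧ τ x ∈ U m := fun m => by
    obtain ⟨_, hzU, x, hx, rfl⟩ := mem_closure_iff_nhds.1 (hy m) (U m) (hU.mem m)
    exact ⟨x, hx, hzU⟩
  choose x hxb hxU using this
  have hC : IsCompact (univ.pi fun i => Iic (b i)) :=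
    isCompact_univ_pi fun i => (finite_Iic _).isCompact
  -- The truncations `min (x m) b` lie in the compact box and agree with `x m` below `m`.
  obtain ⟨a, ha, φ, hφ, hlim⟩ :=
    hC.tendsto_subseq (x := fun m i => min (x m i) (b i)) fun m => by simp [Pi.le_def]
  have hx : Tendsto (fun n => x (φ n)) atTop (𝓝 a) := by
    refine tendsto_pi_nhds.2 fun i => ((tendsto_pi_nhds.1 hlim) i).congr' ?_
    filter_upwards [eventually_gt_atTop i] with n hn
    exact min_eq_left (hxb _ i (hn.trans_le hφ.le_apply))
  exact ⟨a, ha, tendsto_nhds_unique ((hτ.tendsto a).comp hx)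
    (hU.tendsto fun n => hU.antitone hφ.le_apply (hxU (φ n)))⟩

lemma exists_bound_measure_range_le {X : Type*} [MeasurableSpace X] (μ : Measure X)
    [IsFiniteMeasure μ] (τ : (ℕ → ℕ) → X) {δ : ℕ → ℝ≥0∞} (hδ : ∀ i, δ i ≠ 0) :
    ∃ b : ℕ → ℕ, ∀ m,
      μ (range τ) ≤ μ (τ '' {x | ∀ i < m, x i ≤ b i}) + ∑ i ∈ Finset.range m, δ i := by
  choose J hJ using fun S m => exists_measure_image_lt_inter_add μ τ S m (hδ m)
  -- Bound the coordinates one at a time, losing at most `δ m` at step `m`.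
  let S : ℕ → Set (ℕ → ℕ) := fun m => Nat.rec univ (fun m Sm => Sm ∩ {x | x m ≤ J Sm m}) m
  let b : ℕ → ℕ := fun m => J (S m) m
  have hS : ∀ m, S m = {x | ∀ i < m, x i ≤ b i} := by
    intro m
    induction m with
    | zero => simp [S]
    | succ m ih =>
      change S m ∩ {x | x m ≤ b m} = _
      ext x
      simp only [ih, mem_inter_iff, mem_ofPred_eq, Nat.lt_succ_iff_lt_or_eq]
      exact ⟨fun ⟨h, hm⟩ i hi => hi.elim (h i) (· ▸ hm),
        fun h => ⟨fun i hi => h i (.inl hi), h m (.inr rfl)⟩⟩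
  refine ⟨b, fun m => ?_⟩
  rw [← hS]
  induction m with
  | zero => simp [S]
  | succ m ih =>
    calc μ (range τ) ≤ μ (τ '' S m) + ∑ i ∈ Finset.range m, δ i := ih
      _ ≤ μ (τ '' S (m + 1)) + δ m + ∑ i ∈ Finset.range m, δ i := by gcongr; exact (hJ _ _).le
      _ = μ (τ '' S (m + 1)) + ∑ i ∈ Finset.range (m + 1), δ i := by
        rw [Finset.sum_range_succ]; ring

theorem MeasureTheory.AnalyticSet.exists_isCompact_lt_add {X : Type*} [TopologicalSpace X]
    [T2Space X] [FirstCountableTopology X] [MeasurableSpace X] [OpensMeasurableSpace X]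
    (μ : Measure X) [IsFiniteMeasure μ] {A : Set X} (hA : AnalyticSet A) {ε : ℝ≥0∞}
    (hε : ε ≠ 0) : ∃ K ⊆ A, IsCompact K ∧ μ A < μ K + ε := by
  rw [AnalyticSet] at hA
  rcases hA with rfl | ⟨τ, hτ, rfl⟩
  · exact ⟨∅, empty_subset _, isCompact_empty, by simpa using pos_iff_ne_zero.2 hε⟩
  obtain ⟨δ, hδ, hδε⟩ := ENNReal.exists_pos_sum_of_countable' hε ℕ
  obtain ⟨b, hb⟩ := exists_bound_measure_range_le μ τ fun i => (hδ i).ne'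
  set T : ℕ → Set X := fun m => closure (τ '' {x | ∀ i < m, x i ≤ b i})
  have hT : Antitone T := fun m m' hm =>
    closure_mono <| image_mono fun x hx i hi => hx i (hi.trans_le hm)
  refine ⟨τ '' univ.pi fun i => Iic (b i), image_subset_range _ _,
    (isCompact_univ_pi fun i => (finite_Iic _).isCompact).image hτ, ?_⟩
  calc μ (range τ) ≤ (⨅ m, μ (T m)) + ∑' i, δ i := by
        rw [ENNReal.iInf_add]
        exact le_iInf fun m => (hb m).trans <|
          add_le_add (measure_mono subset_closure) (ENNReal.sum_le_tsum _)
    _ = μ (⋂ m, T m) + ∑' i, δ i := by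
        rw [hT.measure_iInter (fun m => isClosed_closure.nullMeasurableSet)
          ⟨0, measure_ne_top μ _⟩]
    _ ≤ μ (τ '' univ.pi fun i => Iic (b i)) + ∑' i, δ i := by
        gcongr
        exact iInter_closure_image_subset_image_pi hτ b
    _ < _ := ENNReal.add_lt_add_left (measure_ne_top μ _) hδε

theorem MeasureTheory.AnalyticSet.inter {X : Type*} [TopologicalSpace X] [T2Space X] {s t : Set X}
    (hs : AnalyticSet s) (ht : AnalyticSet t) : AnalyticSet (s ∩ t) := by
  rw [inter_eq_iInter]
  exact AnalyticSet.iInter fun b => by cases b <;> assumption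

lemma exists_isCompact_subset_inter_range_lt_add {Y Z : Type*} [MeasurableSpace Y]
    [TopologicalSpace Z] [PolishSpace Z] [MeasurableSpace Z] [BorelSpace Z] (μ : Measure Y)
    [IsFiniteMeasure μ] {G : Y → Z} (hG : Measurable G) (hrange : AnalyticSet (range G))
    {D : Set Z} (hD : MeasurableSet D) {δ : ℝ≥0∞} (hδ : δ ≠ 0) :
    ∃ K ⊆ D ∩ range G, IsCompact K ∧ μ (G ⁻¹' D) < μ (G ⁻¹' K) + δ := by
  obtain ⟨K, hKA, hK, hlt⟩ :=
    (hD.analyticSet.inter hrange).exists_isCompact_lt_add (μ.map G) hδ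
  refine ⟨K, hKA, hK, ?_⟩
  calc μ (G ⁻¹' D) = μ (G ⁻¹' (D ∩ range G)) := by rw [preimage_inter_range]
    _ ≤ μ.map G (D ∩ range G) := Measure.le_map_apply hG.aemeasurable _
    _ < μ.map G K + δ := hlt
    _ = μ (G ⁻¹' K) + δ := by rw [Measure.map_apply hG hK.isClosed.measurableSet]

theorem MeasureTheory.AnalyticSet.image_of_measurable {X Y : Type*} [TopologicalSpace X]
    [MeasurableSpace X] [BorelSpace X] [TopologicalSpace Y] [MeasurableSpace Y]
    [OpensMeasurableSpace Y] [SecondCountableTopology Y] {s : Set X} (hs : AnalyticSet s)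
    {f : X → Y} (hf : Measurable f) : AnalyticSet (f '' s) := by
  obtain ⟨β, _, _, τ, hτ, rfl⟩ := analyticSet_iff_exists_polishSpace_range.1 hs
  borelize β
  rw [← image_univ, image_image]
  exact MeasurableSet.univ.analyticSet_image (hf.comp hτ.measurable)

lemma nonempty_biInter_of_addContent_sdiff_le {α : Type*} {C : Set (Set α)} (hC : IsSetRing C)
    {m : AddContent ℝ≥0∞ C} {s t : ℕ → Set α} (hs : ∀ i, s i ∈ C) (ht : ∀ i, t i ∈ C)
    (hanti : Antitone s) {δ : ℕ → ℝ≥0∞} (hδ : ∀ i, m (s i \ t i) ≤ δ i) {k : ℕ}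
    (hlt : ∑' i, δ i < m (s k)) : (⋂ i ∈ Finset.range (k + 1), t i).Nonempty := by
  by_contra hempty
  have hmem : ∀ i, s i \ t i ∈ C := fun i => hC.sdiff_mem (hs i) (ht i)
  have hcover : s k ⊆ ⋃ i ∈ Finset.range (k + 1), s i \ t i := by
    intro y hy
    obtain ⟨i, hi, hyi⟩ : ∃ i ∈ Finset.range (k + 1), y ∉ t i := by
      by_contra! h
      exact hempty ⟨y, mem_iInter₂.2 h⟩
    exact mem_biUnion hi ⟨hanti (Finset.mem_range_succ_iff.1 hi) hy, hyi⟩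
  refine hlt.not_ge ?_
  calc m (s k) ≤ m (⋃ i ∈ Finset.range (k + 1), s i \ t i) :=
        addContent_mono hC.isSetSemiring (hs k) (hC.biUnion_mem _ fun i _ => hmem i) hcover
    _ ≤ ∑ i ∈ Finset.range (k + 1), δ i :=
        (addContent_biUnion_le hC fun i _ => hmem i).trans (Finset.sum_le_sum fun i _ => hδ i)
    _ ≤ ∑' i, δ i := ENNReal.sum_le_tsum _

section ConsistentContent

variable {Y : Type*} {𝓕 : ℕ → MeasurableSpace Y}

def IsConsistent (μ : ∀ n, @Measure Y (𝓕 n)) : Prop :=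
  ∀ n s, MeasurableSet[𝓕 n] s → μ (n + 1) s = μ n s

lemma isSetRing_iUnion_measurableSet (hmono : Monotone 𝓕) :
    IsSetRing (⋃ n, {s | MeasurableSet[𝓕 n] s}) where
  empty_mem := mem_iUnion.2 ⟨0, @MeasurableSet.empty _ (𝓕 0)⟩
  union_mem s t hs ht := by
    obtain ⟨a, hs⟩ := mem_iUnion.1 hs
    obtain ⟨b, ht⟩ := mem_iUnion.1 ht
    exact mem_iUnion.2
      ⟨max a b, (hmono (le_max_left a b) _ hs).union (hmono (le_max_right a b) _ ht)⟩
  sdiff_mem s t hs ht := by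
    obtain ⟨a, hs⟩ := mem_iUnion.1 hs
    obtain ⟨b, ht⟩ := mem_iUnion.1 ht
    exact mem_iUnion.2
      ⟨max a b, (hmono (le_max_left a b) _ hs).diff (hmono (le_max_right a b) _ ht)⟩

variable {μ : ∀ n, @Measure Y (𝓕 n)}

lemma IsConsistent.measure_eq_of_le (hcons : IsConsistent μ) (hmono : Monotone 𝓕) {k n : ℕ}
    (hkn : k ≤ n) {s : Set Y} (hs : MeasurableSet[𝓕 k] s) : μ n s = μ k s := by
  induction n, hkn using Nat.le_induction with
  | base => rfl
  | succ n hkn ih => rw [hcons n s (hmono hkn s hs), ih]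

lemma IsConsistent.iInf_measure_eq (hcons : IsConsistent μ) (hmono : Monotone 𝓕) {n : ℕ}
    {s : Set Y} (hs : MeasurableSet[𝓕 n] s) : ⨅ k, ⨅ (_ : MeasurableSet[𝓕 k] s), μ k s = μ n s :=
  le_antisymm (iInf₂_le n hs) <| le_iInf₂ fun k hk => by
    rw [← hcons.measure_eq_of_le hmono (le_max_left n k) hs,
      ← hcons.measure_eq_of_le hmono (le_max_right n k) hk]

noncomputable def consistentContent (hmono : Monotone 𝓕) (hcons : IsConsistent μ) :
    AddContent ℝ≥0∞ (⋃ n, {s | MeasurableSet[𝓕 n] s}) :=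
  (isSetRing_iUnion_measurableSet hmono).addContent_of_union
    (fun s => ⨅ k, ⨅ (_ : MeasurableSet[𝓕 k] s), μ k s)
    (by rw [hcons.iInf_measure_eq hmono (@MeasurableSet.empty _ (𝓕 0)), measure_empty])
    fun {s t} hs ht hst => by
      obtain ⟨a, hs⟩ := mem_iUnion.1 hs
      obtain ⟨b, ht⟩ := mem_iUnion.1 ht
      have hs' := hmono (le_max_left a b) _ hs
      have ht' := hmono (le_max_right a b) _ ht
      simp only [hcons.iInf_measure_eq hmono hs', hcons.iInf_measure_eq hmono ht',
        hcons.iInf_measure_eq hmono (hs'.union ht')]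
      exact @measure_union _ (𝓕 (max a b)) _ _ _ hst ht'

lemma consistentContent_eq (hmono : Monotone 𝓕) (hcons : IsConsistent μ) {n : ℕ} {s : Set Y}
    (hs : MeasurableSet[𝓕 n] s) : consistentContent hmono hcons s = μ n s :=
  hcons.iInf_measure_eq hmono hs

theorem exists_measure_eq_of_nonempty_iInter (hmono : Monotone 𝓕) (hcons : IsConsistent μ)
    (hfin : ∀ n, @IsFiniteMeasure Y (𝓕 n) (μ n))
    (hcompact : ∀ s : ℕ → Set Y, (∀ k, s k ∈ ⋃ n, {s | MeasurableSet[𝓕 n] s}) → Antitone s →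
      ∀ ε, 0 < ε → (∀ k, ε ≤ consistentContent hmono hcons (s k)) → (⋂ k, s k).Nonempty) :
    ∃ ν : @Measure Y (⨆ n, 𝓕 n), ∀ n s, MeasurableSet[𝓕 n] s → ν s = μ n s := by
  set m := consistentContent hmono hcons
  have hC := isSetRing_iUnion_measurableSet hmono
  have hm_ne_top : ∀ s ∈ ⋃ n, {s | MeasurableSet[𝓕 n] s}, m s ≠ ∞ := fun s hs => by
    obtain ⟨n, hs⟩ := mem_iUnion.1 hs
    rw [consistentContent_eq hmono hcons hs]
    exact @measure_ne_top _ (𝓕 n) _ (hfin n) _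
  have hm_tendsto : ∀ ⦃s : ℕ → Set Y⦄, (∀ k, s k ∈ ⋃ n, {s | MeasurableSet[𝓕 n] s}) →
      Antitone s → (⋂ k, s k) = ∅ → Tendsto (fun k => m (s k)) atTop (𝓝 0) := by
    intro s hs hanti hempty
    have hmono_m : Antitone fun k => m (s k) := fun i j hij =>
      addContent_mono hC.isSetSemiring (hs j) (hs i) (hanti hij)
    convert tendsto_atTop_iInf hmono_m
    by_contra hpos
    obtain ⟨y, hy⟩ := hcompact s hs hanti _ (pos_iff_ne_zero.2 (Ne.symm hpos)) (iInf_le _)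
    exact hempty.subset hy
  have hσ : m.IsSigmaSubadditive := isSigmaSubadditive_of_addContent_iUnion_eq_tsum hC
    fun _ hf hU hd => addContent_iUnion_eq_sum_of_tendsto_zero hC m hm_ne_top hm_tendsto hf hU hd
  have hgen := (MeasurableSpace.generateFrom_iUnion_measurableSet 𝓕).symm
  refine ⟨@AddContent.measure _ _ (⨆ n, 𝓕 n) m hC.isSetSemiring hgen.le hσ, fun n s hs => ?_⟩
  rw [@AddContent.measure_eq _ _ _ (⨆ n, 𝓕 n) m hC.isSetSemiring hgen hσ (mem_iUnion.2 ⟨n, hs⟩),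
    consistentContent_eq hmono hcons hs]

end ConsistentContent

def IsInverseLimit {Y : Type*} (𝓕 : ℕ → MeasurableSpace Y) : Prop :=
  ∀ A : ℕ → Set Y, Antitone A → (∀ n, ∃ y : Y, A n = atomOf (𝓕 n) y) → (⋂ n, A n).Nonempty

section JointMap

variable {Y E : Type*}

def jointMap (f : ℕ → Y → E) (y : Y) : ℕ → E := fun i => f i y

def truncate (n : ℕ) (ω : ℕ → E) : ℕ → E := fun i => ω (min i n)

lemma continuous_truncate [TopologicalSpace E] (n : ℕ) : Continuous (truncate (E := E) n) :=
  continuous_pi fun _ => continuous_apply _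

lemma truncate_mem_range_of_le {f : ℕ → Y → E} {ω : ℕ → E} {n N : ℕ} (hnN : n ≤ N)
    (h : truncate N ω ∈ range (truncate N ∘ jointMap f)) :
    truncate n ω ∈ range (truncate n ∘ jointMap f) := by
  obtain ⟨y, hy⟩ := h
  refine ⟨y, funext fun i => ?_⟩
  have := congrFun hy (min i n)
  simp only [Function.comp_apply, truncate, jointMap] at this ⊢
  rwa [min_eq_left ((min_le_right i n).trans hnN)] at this

variable [MeasurableSpace E] {𝓕 : ℕ → MeasurableSpace Y}

lemma atomOf_comap [MeasurableSingletonClass E] (g : Y → E) (z : Y) :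
    atomOf (MeasurableSpace.comap g ‹_›) z = g ⁻¹' {g z} := by
  refine subset_antisymm (sInter_subset_of_mem ⟨⟨{g z}, measurableSet_singleton _, rfl⟩, rfl⟩) ?_
  rintro y hy s ⟨⟨B, -, rfl⟩, hz⟩
  simpa [show g y = g z from hy] using hz

lemma comap_jointMap (f : ℕ → Y → E) :
    MeasurableSpace.comap (jointMap f) MeasurableSpace.pi =
      ⨆ n, MeasurableSpace.comap (f n) ‹_› := by
  simp only [MeasurableSpace.pi, MeasurableSpace.comap_iSup, MeasurableSpace.comap_comp]
  rfl

lemma measurable_truncate_comp_jointMap (hmono : Monotone 𝓕) {f : ℕ → Y → E}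
    (hf : ∀ n, Measurable[𝓕 n] (f n)) (n : ℕ) : Measurable[𝓕 n] (truncate n ∘ jointMap f) :=
  @measurable_pi_lambda _ _ _ (𝓕 n) _ _ fun i => (hf _).mono (hmono (min_le_right i n)) le_rfl

lemma range_jointMap_eq [MeasurableSingletonClass E] (hmono : Monotone 𝓕) {f : ℕ → Y → E}
    (hf : ∀ n, MeasurableSpace.comap (f n) ‹_› = 𝓕 n) (hlim : IsInverseLimit 𝓕) :
    range (jointMap f) = ⋂ n, truncate n ⁻¹' range (truncate n ∘ jointMap f) := by
  refine subset_antisymm (fun _ ⟨y, hy⟩ => mem_iInter.2 fun n => ⟨y, hy ▸ rfl⟩) fun ω hω => ?_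
  choose z hz using mem_iInter.1 hω
  have hzω : ∀ {i n}, i ≤ n → f i (z n) = ω i := fun {i n} hin => by
    simpa [truncate, jointMap, min_eq_left hin] using congrFun (hz n) i
  -- The fibre of `f n` over `ω n` is the atom of `z n`, and these atoms decrease because
  -- `f n` factors through `f (n + 1)`.
  have hfactor : ∀ n, Function.FactorsThrough (f n) (f (n + 1)) := fun n =>
    Measurable.factorsThrough <| by
      rw [hf (n + 1)]
      exact (Measurable.of_comap_le (hf n).le).mono (hmono n.le_succ) le_rfl
  obtain ⟨y, hy⟩ := hlim (fun n => f n ⁻¹' {ω n})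
    (antitone_nat_of_succ_le fun n y' hy' => by
      have : f (n + 1) y' = f (n + 1) (z (n + 1)) := (hzω le_rfl).symm ▸ hy'
      exact (hfactor n this).trans (hzω n.le_succ))
    fun n => ⟨z n, by rw [← hf n, atomOf_comap, hzω le_rfl]⟩
  exact ⟨y, funext fun n => mem_iInter.1 hy n⟩

end JointMap

section Compactness

variable {Y E : Type*} [TopologicalSpace E] [PolishSpace E] [MeasurableSpace E] [BorelSpace E]
  {𝓕 : ℕ → MeasurableSpace Y}

lemma analyticSet_range_truncate_comp_jointMap (hmono : Monotone 𝓕) {f : ℕ → Y → E}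
    (hf : ∀ n, MeasurableSpace.comap (f n) ‹_› = 𝓕 n) (hrange : ∀ n, AnalyticSet (range (f n)))
    (n : ℕ) : AnalyticSet (range (truncate n ∘ jointMap f)) := by
  rcases isEmpty_or_nonempty Y with hY | ⟨⟨y⟩⟩
  · rw [range_eq_empty]
    exact analyticSet_empty
  have : Nonempty E := ⟨f 0 y⟩
  obtain ⟨Φ, hΦ, hfac⟩ := Measurable.exists_eq_measurable_comp (f := f n) <| by
    rw [hf n]
    exact measurable_truncate_comp_jointMap hmono (fun i => Measurable.of_comap_le (hf i).le) n
  rw [hfac, range_comp]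
  exact (hrange n).image_of_measurable hΦ

lemma analyticSet_range_jointMap (hmono : Monotone 𝓕) {f : ℕ → Y → E}
    (hf : ∀ n, MeasurableSpace.comap (f n) ‹_› = 𝓕 n) (hrange : ∀ n, AnalyticSet (range (f n)))
    (hlim : IsInverseLimit 𝓕) :
    AnalyticSet (range (jointMap f)) := by
  rw [range_jointMap_eq hmono hf hlim]
  exact AnalyticSet.iInter fun n =>
    (analyticSet_range_truncate_comp_jointMap hmono hf hrange n).preimage (continuous_truncate n)

lemma exists_isCompact_truncate_approx (hmono : Monotone 𝓕) {f : ℕ → Y → E}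
    (hf : ∀ n, MeasurableSpace.comap (f n) ‹_› = 𝓕 n) (hrange : ∀ n, AnalyticSet (range (f n)))
    {μ : ∀ n, @Measure Y (𝓕 n)} (hcons : IsConsistent μ)
    (hfin : ∀ n, @IsFiniteMeasure Y (𝓕 n) (μ n)) (k : ℕ) {s : Set Y}
    (hs : s ∈ ⋃ n, {t | MeasurableSet[𝓕 n] t}) {δ : ℝ≥0∞} (hδ : δ ≠ 0) :
    ∃ n, k ≤ n ∧ ∃ K : Set (ℕ → E), IsCompact K ∧ K ⊆ range (truncate n ∘ jointMap f) ∧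
      MeasurableSet[𝓕 n] (jointMap f ⁻¹' (truncate n ⁻¹' K)) ∧
      jointMap f ⁻¹' (truncate n ⁻¹' K) ⊆ s ∧
      consistentContent hmono hcons (s \ jointMap f ⁻¹' (truncate n ⁻¹' K)) ≤ δ := by
  obtain ⟨n₀, hn₀⟩ := mem_iUnion.1 hs
  set n := max n₀ k
  have hG : Measurable[𝓕 n] (truncate n ∘ jointMap f) :=
    measurable_truncate_comp_jointMap hmono (fun i => Measurable.of_comap_le (hf i).le) n
  have hsn := hmono (le_max_left n₀ k) _ hn₀
  obtain ⟨B, hB, rfl⟩ := hf n ▸ hsn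
  have hpre : (truncate n ∘ jointMap f) ⁻¹' ((fun ω => ω n) ⁻¹' B) = f n ⁻¹' B := by
    ext y
    simp [truncate, jointMap]
  let := 𝓕 n
  have := hfin n
  obtain ⟨K, hKsub, hK, hlt⟩ := exists_isCompact_subset_inter_range_lt_add (μ n) hG
    (analyticSet_range_truncate_comp_jointMap hmono hf hrange n) (measurable_pi_apply n hB) hδ
  have hKmeas : MeasurableSet (jointMap f ⁻¹' (truncate n ⁻¹' K)) := hG hK.isClosed.measurableSet
  have hKs : jointMap f ⁻¹' (truncate n ⁻¹' K) ⊆ f n ⁻¹' B :=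
    hpre ▸ preimage_mono fun ω hω => (hKsub hω).1
  refine ⟨n, le_max_right n₀ k, K, hK, fun ω hω => (hKsub hω).2, hKmeas, hKs, ?_⟩
  rw [consistentContent_eq hmono hcons (hsn.diff hKmeas)]
  exact (measure_sdiff_le_iff_le_add hKmeas.nullMeasurableSet hKs (measure_ne_top _ _)).2
    (hpre ▸ hlt).le

theorem nonempty_iInter_of_le_consistentContent [CompactSpace E] (hmono : Monotone 𝓕)
    {f : ℕ → Y → E} (hf : ∀ n, MeasurableSpace.comap (f n) ‹_› = 𝓕 n)
    (hrange : ∀ n, AnalyticSet (range (f n))) (hlim : IsInverseLimit 𝓕)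
    {μ : ∀ n, @Measure Y (𝓕 n)} (hcons : IsConsistent μ)
    (hfin : ∀ n, @IsFiniteMeasure Y (𝓕 n) (μ n)) {s : ℕ → Set Y}
    (hs : ∀ k, s k ∈ ⋃ n, {t | MeasurableSet[𝓕 n] t}) (hanti : Antitone s) {ε : ℝ≥0∞}
    (hε : 0 < ε) (hle : ∀ k, ε ≤ consistentContent hmono hcons (s k)) :
    (⋂ k, s k).Nonempty := by
  obtain ⟨δ, hδ, hδε⟩ := ENNReal.exists_pos_sum_of_countable' hε.ne' ℕ
  choose n hkn K hK hKrange hKmeas hKs hdiff using fun k =>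
    exists_isCompact_truncate_approx hmono hf hrange hcons hfin k (hs k) (hδ k).ne'
  set g := jointMap f
  let L : ℕ → Set (ℕ → E) := fun k => ⋂ i ∈ Finset.range (k + 1), truncate (n i) ⁻¹' K i
  have hL_closed : ∀ k, IsClosed (L k) := fun k =>
    isClosed_biInter fun i _ => (hK i).isClosed.preimage (continuous_truncate _)
  have hL_ne : ∀ k, (L k).Nonempty := fun k => by
    refine nonempty_of_nonempty_preimage (f := g) ?_
    rw [preimage_iInter₂]
    exact nonempty_biInter_of_addContent_sdiff_le (isSetRing_iUnion_measurableSet hmono) hs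
      (fun i => mem_iUnion.2 ⟨n i, hKmeas i⟩) hanti hdiff (hδε.trans_le (hle k))
  obtain ⟨ω, hω⟩ := IsCompact.nonempty_iInter_of_sequence_nonempty_isCompact_isClosed L
    (fun k => biInter_subset_biInter_left (Finset.range_subset_range.2 (k + 1).le_succ)) hL_ne
    (hL_closed 0).isCompact hL_closed
  have hωK : ∀ k, truncate (n k) ω ∈ K k := fun k =>
    mem_iInter₂.1 (mem_iInter.1 hω k) k (Finset.self_mem_range_succ k)
  obtain ⟨y, rfl⟩ : ω ∈ range g := by
    rw [range_jointMap_eq hmono hf hlim]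
    exact mem_iInter.2 fun k => truncate_mem_range_of_le (hkn k) (hKrange k (hωK k))
  exact ⟨y, mem_iInter.2 fun k => hKs k (hωK k)⟩

end Compactness

-- Instance search does not find this on its own.
instance : PolishSpace (ℕ → Bool) :=
  @instPolishSpaceOfSeparableSpaceOfIsCompletelyMetrizableSpace _ _ inferInstance inferInstance

lemma isTypeA'_comap_of_analyticSet_range {X : Type*} {g : X → ℕ → ℕ → Bool}
    (hg : AnalyticSet (range g)) : IsTypeA' (MeasurableSpace.comap g MeasurableSpace.pi) := by
  let e : (ℕ → ℕ → Bool) ≃ₜ (ℕ → Bool) :=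
    Homeomorph.piCurry.symm.trans (Homeomorph.piCongrLeft (Y := fun _ => Bool) Nat.pairEquiv)
  have hcomap : MeasurableSpace.comap (e ∘ g) MeasurableSpace.pi =
      MeasurableSpace.comap g MeasurableSpace.pi := by
    rw [← MeasurableSpace.comap_comp]
    congr 1
    exact e.toMeasurableEquiv.measurableEmbedding.comap_eq
  refine ⟨hcomap ▸ MeasurableSpace.CountablyGenerated.comap _, e ∘ g, hcomap, ?_⟩
  rw [range_comp]
  exact hg.image_of_continuous e.continuous

theorem stmt12_general {Y : Type*}
    (𝓕 : ℕ → MeasurableSpace Y) (hmono : Monotone 𝓕)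
    (hA : ∀ n, IsTypeA' (𝓕 n))
    (hlim : ∀ A : ℕ → Set Y, Antitone A →
      (∀ n, ∃ y : Y, A n = atomOf (𝓕 n) y) → (⋂ n, A n).Nonempty) :
    IsTypeA' (⨆ n, 𝓕 n) ∧
      ∀ μn : (n : ℕ) → @Measure Y (𝓕 n),
        (∀ n, @IsProbabilityMeasure Y (𝓕 n) (μn n)) →
        (∀ n, ∀ s : Set Y, MeasurableSet[𝓕 n] s → μn (n + 1) s = μn n s) →
        ∃ μ : @Measure Y (⨆ n, 𝓕 n),
          @IsProbabilityMeasure Y (⨆ n, 𝓕 n) μ ∧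
            ∀ n, ∀ s : Set Y, MeasurableSet[𝓕 n] s → μ s = μn n s := by
  choose _ f hf hrange using hA
  have hjoint : MeasurableSpace.comap (jointMap f) MeasurableSpace.pi = ⨆ n, 𝓕 n := by
    rw [comap_jointMap]
    exact iSup_congr hf
  refine ⟨hjoint ▸ isTypeA'_comap_of_analyticSet_range
    (analyticSet_range_jointMap hmono hf hrange hlim), fun μ hprob hcons => ?_⟩
  have hfin : ∀ n, @IsFiniteMeasure Y (𝓕 n) (μ n) := fun n => by
    let := 𝓕 n
    have := hprob n
    infer_instance
  obtain ⟨ν, hν⟩ := exists_measure_eq_of_nonempty_iInter hmono hcons hfin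
    fun s hs hanti ε hε hle =>
      nonempty_iInter_of_le_consistentContent hmono hf hrange hlim hcons hfin hs hanti hε hle
  refine ⟨ν, ⟨?_⟩, hν⟩
  rw [hν 0 univ (@MeasurableSet.univ _ (𝓕 0))]
  exact @measure_univ _ (𝓕 0) _ (hprob 0)

/-- (Kolmogorov extension theorem for type A spaces) Let `{F_n}` be an increasing sequence
of countably generated σ-algebras on a nonempty set `Y`, each `(Y,F_n)` a type A space,
and let `F = σ(⋃ F_n) = ⨆ F_n`.  Assume `F` is the inverse limit of `{F_n}`: every
decreasing sequence of atoms `A_n` of `F_n` has nonempty intersection.  Then `(Y,F)` is a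
type A space and `{F_n}` has the Kolmogorov extension property: any consistent sequence of
probability measures `μ_n` on `(Y,F_n)` has a common extension to a probability measure on
`(Y,F)`. -/
theorem stmt12 {Y : Type*} [Nonempty Y]
    (𝓕 : ℕ → MeasurableSpace Y) (hmono : Monotone 𝓕)
    (hcg : ∀ n, @MeasurableSpace.CountablyGenerated Y (𝓕 n))
    (hA : ∀ n, IsTypeA' (𝓕 n))
    (hlim : ∀ A : ℕ → Set Y, Antitone A →
      (∀ n, ∃ y : Y, A n = atomOf (𝓕 n) y) → (⋂ n, A n).Nonempty) :
    IsTypeA' (⨆ n, 𝓕 n) ∧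
      ∀ μn : (n : ℕ) → @Measure Y (𝓕 n),
        (∀ n, @IsProbabilityMeasure Y (𝓕 n) (μn n)) →
        (∀ n, ∀ s : Set Y, MeasurableSet[𝓕 n] s → μn (n + 1) s = μn n s) →
        ∃ μ : @Measure Y (⨆ n, 𝓕 n),
          @IsProbabilityMeasure Y (⨆ n, 𝓕 n) μ ∧
            ∀ n, ∀ s : Set Y, MeasurableSet[𝓕 n] s → μ s = μn n s :=
  stmt12_general 𝓕 hmono hA hlim
end

section
/- (Existence of conditional distributions) Let (X,E) be a countably generated measurable space and (Y,F) a type B space. Then for every probability measure μ on the product space (X × Y, E ⊗ F) there exists a probability kernel π : X × F → ℝ≥0 (meaning π(x,·) is a probability measure on (Y,F) for each x ∈ X, and x ↦ π(x,F') is E-measurable for each F' ∈ F) such that μ(E' × F') = ∫_{E'} π(x,F') dμ₁(x) for all E' ∈ E and F' ∈ F, where μ₁ is the image of μ under the projection X × Y → X. -/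
/-!
Push `μ` forward along `id × f`, where `f : Y → M` is exactly measurable with Borel range, and
disintegrate the image on the standard Borel space `X × M`. Because `f` is exactly measurable,
`invFun f` is measurable as soon as `f ∘ invFun f` is, which holds since the range is Borel.
The conditional kernel is a.e. concentrated on `range f`, where `f ∘ invFun f = id`, so its
image under `invFun f` is a Markov kernel into `Y` giving `f ⁻¹' B'` the same mass as the
conditional kernel gives `B'`; as every measurable `F' ⊆ Y` is such an `f ⁻¹' B'`, this kernel
disintegrates `μ`.
-/

open MeasureTheory

/-- A map `f : (X,E) → (Y,F)` between measurable spaces is *exactly measurable* if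
`f⁻¹(F) = E`. -/
def ExactlyMeasurable {X Y : Type*} [mX : MeasurableSpace X] [mY : MeasurableSpace Y]
    (f : X → Y) : Prop :=
  MeasurableSpace.comap f mY = mX

/-- A countably generated measurable space `(X,E)` is a *type B space* if there is an
exactly measurable map `f : (X,E) → (M,B)` into the Cantor space whose range is Borel. -/
def IsTypeB (X : Type*) [MeasurableSpace X] : Prop :=
  MeasurableSpace.CountablyGenerated X ∧
    ∃ f : X → (ℕ → Bool), ExactlyMeasurable f ∧ MeasurableSet (Set.range f)

open ProbabilityTheory Set Function

namespace ExactlyMeasurable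

variable {Y Z : Type*} [MeasurableSpace Y] [MeasurableSpace Z] {f : Y → Z}

theorem measurable (hf : ExactlyMeasurable f) : Measurable f :=
  measurable_iff_comap_le.2 hf.le

theorem exists_measurableSet_preimage_eq (hf : ExactlyMeasurable f) {s : Set Y}
    (hs : MeasurableSet s) : ∃ t, MeasurableSet t ∧ f ⁻¹' t = s :=
  MeasurableSpace.measurableSet_comap.1 (hf ▸ hs)

theorem measurable_comp_iff (hf : ExactlyMeasurable f) {W : Type*} [MeasurableSpace W]
    {g : W → Y} : Measurable (f ∘ g) ↔ Measurable g := by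
  rw [measurable_iff_comap_le, measurable_iff_comap_le, ← MeasurableSpace.comap_comp, hf]

theorem measurable_invFun [Nonempty Y] (hf : ExactlyMeasurable f)
    (hR : MeasurableSet (range f)) : Measurable (invFun f) := by
  classical
  rw [← hf.measurable_comp_iff]
  have : f ∘ invFun f = (range f).piecewise id fun _ ↦ f (Classical.choice ‹_›) := by
    ext z
    by_cases hz : z ∈ range f
    · simp [hz, invFun_eq hz]
    · simp [hz, invFun_neg hz]
  rw [this]
  exact Measurable.piecewise hR measurable_id measurable_const

end ExactlyMeasurable

theorem MeasureTheory.Measure.ae_condKernel_mem {α Ω : Type*} [MeasurableSpace α]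
    [MeasurableSpace Ω] [StandardBorelSpace Ω] [Nonempty Ω] {ρ : Measure (α × Ω)}
    [IsFiniteMeasure ρ] {s : Set Ω} (h : ∀ᵐ p ∂ρ, p.2 ∈ s) :
    ∀ᵐ a ∂ρ.fst, ∀ᵐ ω ∂ρ.condKernel a, ω ∈ s := by
  rw [← ρ.disintegrate ρ.condKernel] at h
  exact Measure.ae_ae_of_ae_compProd h

theorem exists_isMarkovKernel_disintegration_of_exactlyMeasurable {X Y Z : Type*}
    [MeasurableSpace X] [MeasurableSpace Y] [MeasurableSpace Z] [StandardBorelSpace Z]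
    {f : Y → Z} (hf : ExactlyMeasurable f) (hR : MeasurableSet (range f))
    (μ : Measure (X × Y)) [IsProbabilityMeasure μ] :
    ∃ π : Kernel X Y, IsMarkovKernel π ∧
      ∀ E' : Set X, ∀ F' : Set Y, MeasurableSet E' → MeasurableSet F' →
        μ (E' ×ˢ F') = ∫⁻ x in E', π x F' ∂(μ.map Prod.fst) := by
  have : Nonempty Y := (nonempty_prod.1 (nonempty_of_isProbabilityMeasure μ)).2
  have : Nonempty Z := ⟨f (Classical.arbitrary Y)⟩
  have hpf : Measurable (Prod.map id f : X × Y → X × Z) := measurable_id.prodMap hf.measurable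
  set ν := μ.map (Prod.map id f)
  have hν_fst : ν.fst = μ.map Prod.fst := by
    rw [Measure.fst, Measure.map_map measurable_fst hpf]
    rfl
  have hν_range : ∀ᵐ p ∂ν, p.2 ∈ range f :=
    (ae_map_iff hpf.aemeasurable (measurable_snd hR)).2 (ae_of_all _ fun _ ↦ mem_range_self _)
  have hf_invFun : ∀ᵐ x ∂ν.fst, ∀ᵐ z ∂ν.condKernel x, f (invFun f z) = z :=
    (Measure.ae_condKernel_mem hν_range).mono fun _ hx ↦ hx.mono fun _ hz ↦ invFun_eq hz
  have hg := hf.measurable_invFun hR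
  refine ⟨ν.condKernel.map (invFun f), Kernel.IsMarkovKernel.map _ hg, fun E F hE hF ↦ ?_⟩
  obtain ⟨B, hB, rfl⟩ := hf.exists_measurableSet_preimage_eq hF
  calc μ (E ×ˢ (f ⁻¹' B)) = ν (E ×ˢ B) := by
        rw [Measure.map_apply hpf (hE.prod hB), preimage_prod_map_prod, preimage_id]
    _ = ∫⁻ x in E, ν.condKernel x B ∂ν.fst :=
        (ν.setLIntegral_condKernel_eq_measure_prod hE hB).symm
    _ = ∫⁻ x in E, ν.condKernel.map (invFun f) x (f ⁻¹' B) ∂(μ.map Prod.fst) := by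
        rw [← hν_fst]
        refine lintegral_congr_ae (ae_restrict_of_ae ?_)
        filter_upwards [hf_invFun] with x hx
        rw [Kernel.map_apply' _ hg _ hF, ← preimage_comp]
        exact (measure_congr (hx.mono fun z hz ↦ congrArg (· ∈ B) hz)).symm

theorem stmt13_general {X Y : Type*} [MeasurableSpace X] [MeasurableSpace Y]
    (hY : IsTypeB Y)
    (μ : Measure (X × Y)) (hμ : IsProbabilityMeasure μ) :
    ∃ π : X → Measure Y,
      (∀ x, IsProbabilityMeasure (π x)) ∧
      (∀ F' : Set Y, MeasurableSet F' → Measurable fun x => π x F') ∧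
      ∀ E' : Set X, ∀ F' : Set Y, MeasurableSet E' → MeasurableSet F' →
        μ (E' ×ˢ F') = ∫⁻ x in E', π x F' ∂(μ.map Prod.fst) := by
  obtain ⟨-, f, hf, hR⟩ := hY
  have := hμ
  obtain ⟨π, hπ, hμπ⟩ := exists_isMarkovKernel_disintegration_of_exactlyMeasurable hf hR μ
  exact ⟨π, fun _ ↦ inferInstance, fun _ hF ↦ π.measurable_coe hF, hμπ⟩

/-- (Existence of conditional distributions) Let `(X,E)` be countably generated and
`(Y,F)` a type B space.  For every probability measure `μ` on `(X × Y, E ⊗ F)` there is a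
probability kernel `π : X × F → ℝ≥0` with
`μ(E' × F') = ∫_{E'} π(x,F') dμ₁(x)` for all `E' ∈ E`, `F' ∈ F`, where `μ₁` is the image
of `μ` under the projection onto `X`. -/
theorem stmt13 {X Y : Type*} [MeasurableSpace X] [MeasurableSpace Y]
    [MeasurableSpace.CountablyGenerated X] (hY : IsTypeB Y)
    (μ : Measure (X × Y)) (hμ : IsProbabilityMeasure μ) :
    ∃ π : X → Measure Y,
      (∀ x, IsProbabilityMeasure (π x)) ∧
      (∀ F' : Set Y, MeasurableSet F' → Measurable fun x => π x F') ∧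
      ∀ E' : Set X, ∀ F' : Set Y, MeasurableSet E' → MeasurableSet F' →
        μ (E' ×ˢ F') = ∫⁻ x in E', π x F' ∂(μ.map Prod.fst) :=
  stmt13_general hY μ hμ
end
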